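/- arXiv:2303.11876 — 4 statements merged into one kernel-verified Lean document; each statement's English description precedes it below -/
import Mathlib

section
/- Existence and uniqueness of solutions of polynomial SDEs: let K be a field of characteristic 0, n ≥ 1, let p₁,...,pₙ be polynomials in the variables x, y₁, ..., yₙ with coefficients in K, and let r = (r₁,...,rₙ) ∈ Kⁿ. Then there exists a unique tuple of streams σ = (σ₁,...,σₙ) over K such that σᵢ(0) = rᵢ and σᵢ' = pᵢ(X, σ) for every i = 1,...,n. -/
/-- Stream derivative: remove the first coefficient. -/
noncomputable def sderiv {K : Type*} [Field K] (σ : PowerSeries K) : PowerSeries K :=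
  PowerSeries.mk fun k => PowerSeries.coeff (R := K) (k + 1) σ

/-- Evaluation of a polynomial in variables `x, y₁, ..., yₙ` (variable `0` playing the
role of `x`) at `x := X` and `yᵢ := σᵢ`. -/
noncomputable def polyEval {K : Type*} [Field K] {n : ℕ}
    (p : MvPolynomial (Fin (n + 1)) K) (σ : Fin n → PowerSeries K) : PowerSeries K :=
  MvPolynomial.aeval (Fin.cons PowerSeries.X σ) p

/-! The initial value problem is equivalent to the fixed-point equation `σᵢ = rᵢ + X pᵢ(X, σ)`.
A polynomial map preserves agreement of streams up to order `N`, and multiplication by `X` raises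
it to order `N + 1`, so the right-hand side is a contraction for the `X`-adic metric. As in
Banach's theorem, its iterates from `0` converge coefficientwise to the unique fixed point. -/

open PowerSeries

theorem MvPolynomial.aeval_sub_aeval_mem {R A σ : Type*} [CommSemiring R] [CommRing A]
    [Algebra R A] (I : Ideal A) (p : MvPolynomial σ R) {f g : σ → A}
    (h : ∀ i, f i - g i ∈ I) : aeval f p - aeval g p ∈ I := by
  rw [← Ideal.Quotient.mk_eq_mk_iff_sub_mem, ← Ideal.Quotient.mkₐ_eq_mk R,
    comp_aeval_apply, comp_aeval_apply]
  congr 2 with i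
  exact (Ideal.Quotient.mk_eq_mk_iff_sub_mem _ _).2 (h i)

namespace PowerSeries

variable {R : Type*} [CommRing R]

theorem eq_of_forall_X_pow_dvd_sub {f g : R⟦X⟧} (h : ∀ m, X ^ m ∣ f - g) : f = g := by
  ext k
  simpa [sub_eq_zero] using X_pow_dvd_iff.1 (h (k + 1)) k k.lt_succ_self

def IsXAdicContraction {ι : Type*} (Φ : (ι → R⟦X⟧) → ι → R⟦X⟧) : Prop :=
  ∀ N σ τ, (∀ i, X ^ N ∣ σ i - τ i) → ∀ i, X ^ (N + 1) ∣ Φ σ i - Φ τ i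

namespace IsXAdicContraction

variable {ι : Type*} {Φ : (ι → R⟦X⟧) → ι → R⟦X⟧}

theorem X_pow_dvd_iterate_sub (hΦ : IsXAdicContraction Φ) (m : ℕ) (σ τ : ι → R⟦X⟧) (i : ι) :
    X ^ m ∣ Φ^[m] σ i - Φ^[m] τ i := by
  induction m generalizing i with
  | zero => simp
  | succ m ih =>
    simp only [Function.iterate_succ_apply']
    exact hΦ m _ _ ih i

theorem eq_of_isFixedPt (hΦ : IsXAdicContraction Φ) {σ τ : ι → R⟦X⟧}
    (hσ : Function.IsFixedPt Φ σ) (hτ : Function.IsFixedPt Φ τ) : σ = τ := by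
  funext i
  refine eq_of_forall_X_pow_dvd_sub fun m => ?_
  simpa [(hσ.iterate m).eq, (hτ.iterate m).eq] using
    hΦ.X_pow_dvd_iterate_sub m σ τ i

theorem exists_isFixedPt (hΦ : IsXAdicContraction Φ) : ∃ σ, Function.IsFixedPt Φ σ := by
  -- The `k`-th coefficient of the Picard iterates `Φ^[m] 0` is constant from `m = k + 1` on.
  set iter : ℕ → ι → R⟦X⟧ := fun m => Φ^[m] 0
  have iter_stable (m k : ℕ) (i : ι) : X ^ m ∣ iter m i - iter (m + k) i := by
    simpa only [iter, Function.iterate_add_apply] using hΦ.X_pow_dvd_iterate_sub m 0 (Φ^[k] 0) i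
  let σ : ι → R⟦X⟧ := fun i => mk fun k => coeff k (iter (k + 1) i)
  have σ_sub_iter (m : ℕ) (i : ι) : X ^ m ∣ σ i - iter m i := by
    refine X_pow_dvd_iff.2 fun k hk => ?_
    obtain ⟨l, rfl⟩ := Nat.exists_eq_add_of_le hk
    simpa [σ, sub_eq_zero] using X_pow_dvd_iff.1 (iter_stable (k + 1) l i) k k.lt_succ_self
  refine ⟨σ, funext fun i => eq_of_forall_X_pow_dvd_sub fun m => ?_⟩
  have hΦσ : X ^ (m + 1) ∣ Φ σ i - iter (m + 1) i := by
    simpa [iter, Function.iterate_succ_apply'] using hΦ m _ _ (σ_sub_iter m) i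
  have hσ : X ^ (m + 1) ∣ σ i - iter (m + 1) i := σ_sub_iter (m + 1) i
  exact (pow_dvd_pow X m.le_succ).trans (by simpa using dvd_sub hΦσ hσ)

theorem existsUnique_isFixedPt (hΦ : IsXAdicContraction Φ) :
    ∃! σ, Function.IsFixedPt Φ σ :=
  hΦ.exists_isFixedPt.elim fun σ hσ => ⟨σ, hσ, fun _ hτ => hΦ.eq_of_isFixedPt hτ hσ⟩

end IsXAdicContraction

end PowerSeries

section SDE

variable {K : Type*} [Field K] {n : ℕ}

theorem coeff_zero_eq_and_sderiv_eq_iff (f g : PowerSeries K) (a : K) :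
    coeff 0 f = a ∧ sderiv f = g ↔ X * g + C a = f := by
  constructor
  · rintro ⟨rfl, rfl⟩
    simpa [sderiv] using (eq_X_mul_shift_add_const f).symm
  · rintro rfl
    refine ⟨by simp, ?_⟩
    ext k
    simp [sderiv, coeff_succ_X_mul]

theorem X_pow_dvd_polyEval_sub (p : MvPolynomial (Fin (n + 1)) K) {N : ℕ}
    {σ τ : Fin n → PowerSeries K} (h : ∀ i, X ^ N ∣ σ i - τ i) :
    X ^ N ∣ polyEval p σ - polyEval p τ := by
  rw [← Ideal.mem_span_singleton]
  refine MvPolynomial.aeval_sub_aeval_mem _ p fun i => ?_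
  refine Fin.cases ?_ (fun j => ?_) i
  · simp
  · simpa [Ideal.mem_span_singleton] using h j

noncomputable def picard (p : Fin n → MvPolynomial (Fin (n + 1)) K) (r : Fin n → K)
    (σ : Fin n → PowerSeries K) : Fin n → PowerSeries K :=
  fun i => X * polyEval (p i) σ + C (r i)

theorem isXAdicContraction_picard (p : Fin n → MvPolynomial (Fin (n + 1)) K) (r : Fin n → K) :
    IsXAdicContraction (picard p r) := fun N σ τ h i => by
  simpa [picard, pow_succ', ← mul_sub] using
    mul_dvd_mul_left X (X_pow_dvd_polyEval_sub (p i) h)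

end SDE

theorem polynomial_SDE_existence_uniqueness_general {K : Type*} [Field K]
    {n : ℕ} (p : Fin n → MvPolynomial (Fin (n + 1)) K) (r : Fin n → K) :
    ∃! σ : Fin n → PowerSeries K,
      ∀ i, PowerSeries.coeff (R := K) 0 (σ i) = r i ∧ sderiv (σ i) = polyEval (p i) σ := by
  simp only [coeff_zero_eq_and_sderiv_eq_iff, ← funext_iff]
  exact (isXAdicContraction_picard p r).existsUnique_isFixedPt

/-- Existence and uniqueness of solutions of polynomial SDE initial value problems. -/
theorem polynomial_SDE_existence_uniqueness {K : Type*} [Field K] [CharZero K]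
    {n : ℕ} (hn : 1 ≤ n) (p : Fin n → MvPolynomial (Fin (n + 1)) K) (r : Fin n → K) :
    ∃! σ : Fin n → PowerSeries K,
      ∀ i, PowerSeries.coeff (R := K) 0 (σ i) = r i ∧ sderiv (σ i) = polyEval (p i) σ :=
  polynomial_SDE_existence_uniqueness_general p r
end

section
/- Symmetric product rule for stream derivative: for every field K and all streams σ, τ over K, (σ · τ)' = σ' · τ + σ · τ' − X · σ' · τ'. -/
open PowerSeries

theorem X_mul_sderiv {K : Type*} [Field K] (σ : PowerSeries K) :
    X * sderiv σ = σ - C (constantCoeff σ) :=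
  (sub_const_eq_X_mul_shift σ).symm

/-- Symmetric product rule for the stream derivative. -/
theorem sderiv_mul_symmetric {K : Type*} [Field K] (σ τ : PowerSeries K) :
    sderiv (σ * τ) =
      sderiv σ * τ + σ * sderiv τ - PowerSeries.X * sderiv σ * sderiv τ := by
  refine X_mul_cancel ?_
  calc X * sderiv (σ * τ) = σ * τ - C (constantCoeff σ) * C (constantCoeff τ) := by
        rw [X_mul_sderiv, map_mul, map_mul]
    _ = (X * sderiv σ) * τ + σ * (X * sderiv τ) - (X * sderiv σ) * (X * sderiv τ) := by
        rw [X_mul_sderiv, X_mul_sderiv]; ring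
    _ = X * (sderiv σ * τ + σ * sderiv τ - X * sderiv σ * sderiv τ) := by ring
end

section
/- Implicit Function Theorem for streams: let K be a field of characteristic 0, let E = (E₁,...,Eₙ) be polynomials in the variables x, y₁, ..., yₙ with coefficients in K, and let r₀ ∈ Kⁿ be such that Eᵢ(0, r₀) = 0 for all i and the n × n Jacobian matrix over K with (i,j) entry (∂Eᵢ/∂yⱼ)(0, r₀) is invertible. Then there exists a unique tuple of streams σ = (σ₁,...,σₙ) over K such that σᵢ(0) = r₀ᵢ for all i and Eᵢ(X, σ) = 0 for all i. -/
/-!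
If `σ ≡ τ (mod X^m)` with `m ≥ 1` and `τ(0) = r₀`, first-order Taylor expansion gives
`E(X, σ) ≡ E(X, τ) + J (σ - τ) (mod X^(m+1))`, where `J` is the classical Jacobian at `(0, r₀)`.
So the `m`-th coefficient of `E(X, σ)` is an affine function of the `m`-th coefficients of `σ`,
with invertible linear part `J`, and a solution can be built, and is determined, one coefficient
at a time. Existence: correcting the `(k+1)`-st coefficients of an approximate solution `A k` with
`E(X, A k) ≡ 0 (mod X^(k+1))` gives such an approximation modulo `X^(k+2)`, and these converge
`X`-adically to a solution. Uniqueness: two solutions agreeing modulo `X^m` agree modulo `X^(m+1)`.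
-/

namespace MvPolynomial

variable {ι S R : Type*} [CommSemiring S] [CommRing R] [Algebra S R]

theorem dvd_aeval_sub_aeval (p : MvPolynomial ι S) {f g : ι → R} {d : R}
    (h : ∀ i, d ∣ f i - g i) : d ∣ aeval f p - aeval g p := by
  simp_rw [← Ideal.mem_span_singleton, ← Ideal.Quotient.eq, ← Ideal.Quotient.mkₐ_eq_mk S,
    comp_aeval_apply] at h ⊢
  simp only [h]

theorem sq_dvd_aeval_sub_aeval_sub_sum_pderiv [Fintype ι] (p : MvPolynomial ι S) {f g : ι → R}
    {d : R} (h : ∀ i, d ∣ f i - g i) :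
    d ^ 2 ∣ aeval f p - aeval g p - ∑ i, aeval g (pderiv i p) * (f i - g i) := by
  classical
  induction p using MvPolynomial.induction_on with
  | C a => simp
  | add p q hp hq =>
    convert dvd_add hp hq using 1
    simp only [map_add, add_mul, Finset.sum_add_distrib]
    ring
  | mul_X p k hp =>
    set L := ∑ i, aeval g (pderiv i p) * (f i - g i)
    have hL : d ^ 2 ∣ L * (f k - g k) :=
      sq d ▸ mul_dvd_mul (Finset.dvd_sum fun i _ => (h i).mul_left _) (h k)
    have hleibniz (i : ι) : aeval g (pderiv i (p * X k)) * (f i - g i) =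
        aeval g (pderiv i p) * (f i - g i) * g k +
          if k = i then aeval g p * (f k - g k) else 0 := by
      rw [pderiv_mul, pderiv_X, Pi.single_apply]
      split_ifs with hki
      · subst hki
        simp only [map_add, map_mul, aeval_X, mul_one]
        ring
      · simp only [map_mul, aeval_X, mul_zero, add_zero, mul_right_comm]
    rw [Finset.sum_congr rfl fun i _ => hleibniz i, Finset.sum_add_distrib, ← Finset.sum_mul,
      Finset.sum_ite_eq]
    convert dvd_add (hp.mul_right (f k)) hL using 1
    simp only [map_mul, aeval_X, Finset.mem_univ, if_true]
    ring

end MvPolynomial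

namespace PowerSeries

variable {R : Type*} [CommRing R]

theorem X_dvd_sub_iff {φ ψ : R⟦X⟧} : X ∣ φ - ψ ↔ coeff 0 φ = coeff 0 ψ := by
  rw [X_dvd_iff, map_sub, sub_eq_zero, coeff_zero_eq_constantCoeff_apply,
    coeff_zero_eq_constantCoeff_apply]

theorem X_pow_succ_dvd_iff {n : ℕ} {φ : R⟦X⟧} :
    (X : R⟦X⟧) ^ (n + 1) ∣ φ ↔ X ^ n ∣ φ ∧ coeff n φ = 0 := by
  simp only [X_pow_dvd_iff, Nat.lt_succ_iff_lt_or_eq, or_imp, forall_and, forall_eq]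

theorem coeff_mul_of_X_pow_dvd {n : ℕ} (φ : R⟦X⟧) {ψ : R⟦X⟧} (h : X ^ n ∣ ψ) :
    coeff n (φ * ψ) = constantCoeff φ * coeff n ψ := by
  obtain ⟨χ, rfl⟩ := h
  rw [mul_left_comm, coeff_X_pow_mul', coeff_X_pow_mul']
  simp

theorem eq_zero_of_forall_X_pow_dvd {φ : R⟦X⟧} (h : ∀ n, X ^ n ∣ φ) : φ = 0 := by
  ext n
  exact X_pow_dvd_iff.mp (h (n + 1)) n n.lt_succ_self

theorem exists_forall_X_pow_succ_dvd_sub {a : ℕ → R⟦X⟧}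
    (h : ∀ k, X ^ (k + 1) ∣ a (k + 1) - a k) : ∃ s, ∀ k, X ^ (k + 1) ∣ s - a k := by
  have hstable {m k : ℕ} (hmk : m ≤ k) : coeff m (a k) = coeff m (a m) := by
    induction k, hmk using Nat.le_induction with
    | base => rfl
    | succ k hmk ih =>
      rw [← ih, ← sub_eq_zero, ← map_sub]
      exact X_pow_dvd_iff.mp (h k) m (by omega)
  refine ⟨mk fun m => coeff m (a m), fun k => X_pow_dvd_iff.mpr fun m hm => ?_⟩
  rw [map_sub, coeff_mk, hstable (k := k) (by omega), sub_self]

end PowerSeries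

open PowerSeries Matrix

section PolyEval

variable {K : Type*} [Field K] {n : ℕ}

theorem constantCoeff_polyEval (p : MvPolynomial (Fin (n + 1)) K) (σ : Fin n → K⟦X⟧) :
    constantCoeff (polyEval p σ) =
      MvPolynomial.eval (Fin.cons 0 fun j => constantCoeff (σ j)) p := by
  induction p using MvPolynomial.induction_on with
  | C a => simp [polyEval]
  | add p q hp hq => simp_all [polyEval]
  | mul_X p i hp =>
    cases i using Fin.cases <;> simp_all [polyEval]

theorem dvd_polyEval_sub_polyEval (p : MvPolynomial (Fin (n + 1)) K) {σ τ : Fin n → K⟦X⟧}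
    {d : K⟦X⟧} (h : ∀ j, d ∣ σ j - τ j) : d ∣ polyEval p σ - polyEval p τ :=
  MvPolynomial.dvd_aeval_sub_aeval p fun i => i.cases (by simp) (by simpa using h)

theorem coeff_polyEval_sub_polyEval (p : MvPolynomial (Fin (n + 1)) K) {σ τ : Fin n → K⟦X⟧}
    {r0 : Fin n → K} (hτ : ∀ j, coeff 0 (τ j) = r0 j) {m : ℕ} (hm : 1 ≤ m)
    (h : ∀ j, X ^ m ∣ σ j - τ j) :
    coeff m (polyEval p σ - polyEval p τ) =
      ∑ j, MvPolynomial.eval (Fin.cons 0 r0) (MvPolynomial.pderiv j.succ p) *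
        coeff m (σ j - τ j) := by
  have htaylor : X ^ (m + 1) ∣ polyEval p σ - polyEval p τ -
      ∑ j, polyEval (MvPolynomial.pderiv j.succ p) τ * (σ j - τ j) := by
    refine (pow_dvd_pow X (by omega : m + 1 ≤ m * 2)).trans ?_
    rw [pow_mul]
    simpa [polyEval, Fin.sum_univ_succ] using
      MvPolynomial.sq_dvd_aeval_sub_aeval_sub_sum_pderiv p (f := Fin.cons X σ) (g := Fin.cons X τ)
        fun i => i.cases (by simp) (by simpa using h)
  have hcoeff := X_pow_dvd_iff.mp htaylor m m.lt_succ_self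
  rw [map_sub _ (_ - _), sub_eq_zero, map_sum] at hcoeff
  rw [hcoeff]
  congr! 1 with j
  rw [coeff_mul_of_X_pow_dvd _ (h j), constantCoeff_polyEval]
  simp only [← coeff_zero_eq_constantCoeff_apply, hτ]

end PolyEval

section ImplicitFunction

variable {K : Type*} [Field K] {n : ℕ} (E : Fin n → MvPolynomial (Fin (n + 1)) K)
  (r0 : Fin n → K)

noncomputable def jacobianAt : Matrix (Fin n) (Fin n) K :=
  Matrix.of fun i j => MvPolynomial.eval (Fin.cons 0 r0) (MvPolynomial.pderiv j.succ (E i))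

theorem coeff_polyEval_sub_polyEval_eq_mulVec {σ τ : Fin n → K⟦X⟧}
    (hτ : ∀ j, coeff 0 (τ j) = r0 j) {m : ℕ} (hm : 1 ≤ m) (h : ∀ j, X ^ m ∣ σ j - τ j) :
    (fun i => coeff m (polyEval (E i) σ - polyEval (E i) τ)) =
      jacobianAt E r0 *ᵥ fun j => coeff m (σ j - τ j) :=
  funext fun i => coeff_polyEval_sub_polyEval (E i) hτ hm h

theorem eq_of_polyEval_eq_zero (hJ : IsUnit (jacobianAt E r0)) {σ τ : Fin n → K⟦X⟧}
    (hσ0 : ∀ j, coeff 0 (σ j) = r0 j) (hτ0 : ∀ j, coeff 0 (τ j) = r0 j)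
    (hσ : ∀ i, polyEval (E i) σ = 0) (hτ : ∀ i, polyEval (E i) τ = 0) : σ = τ := by
  have hdvd (m : ℕ) (hm : 1 ≤ m) (j : Fin n) : X ^ m ∣ σ j - τ j := by
    induction m, hm using Nat.le_induction generalizing j with
    | base => rw [pow_one, X_dvd_sub_iff, hσ0, hτ0]
    | succ m hm ih =>
      have hlin := coeff_polyEval_sub_polyEval_eq_mulVec E r0 hτ0 hm ih
      simp only [hσ, hτ, sub_self, map_zero] at hlin
      have hc : (fun j => coeff m (σ j - τ j)) = 0 :=
        mulVec_injective_iff_isUnit.mpr hJ (by rw [← hlin, mulVec_zero]; rfl)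
      exact X_pow_succ_dvd_iff.mpr ⟨ih j, congrFun hc j⟩
  funext j
  refine sub_eq_zero.mp (eq_zero_of_forall_X_pow_dvd fun m => ?_)
  exact (pow_dvd_pow X m.le_succ).trans (hdvd (m + 1) (by omega) j)

noncomputable def approxSolution : ℕ → Fin n → K⟦X⟧
  | 0 => fun j => C (r0 j)
  | k + 1 => fun j => approxSolution k j - monomial (k + 1)
      (((jacobianAt E r0)⁻¹ *ᵥ fun i => coeff (k + 1) (polyEval (E i) (approxSolution k))) j)

theorem approxSolution_succ_sub (k : ℕ) (j : Fin n) :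
    approxSolution E r0 (k + 1) j - approxSolution E r0 k j = -monomial (k + 1)
      (((jacobianAt E r0)⁻¹ *ᵥ
        fun i => coeff (k + 1) (polyEval (E i) (approxSolution E r0 k))) j) :=
  sub_sub_cancel_left _ _

theorem X_pow_dvd_approxSolution_succ_sub (k : ℕ) (j : Fin n) :
    X ^ (k + 1) ∣ approxSolution E r0 (k + 1) j - approxSolution E r0 k j := by
  rw [approxSolution_succ_sub, dvd_neg, X_pow_dvd_iff]
  intro m hm
  simp [coeff_monomial, hm.ne]

theorem coeff_zero_approxSolution (k : ℕ) (j : Fin n) :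
    coeff 0 (approxSolution E r0 k j) = r0 j := by
  induction k with
  | zero => exact coeff_zero_C _
  | succ k ih =>
    rw [← ih, ← X_dvd_sub_iff]
    exact (dvd_pow_self X k.succ_ne_zero).trans (X_pow_dvd_approxSolution_succ_sub E r0 k j)

theorem X_pow_dvd_polyEval_approxSolution
    (hE : ∀ i, MvPolynomial.eval (Fin.cons 0 r0) (E i) = 0) (hJ : IsUnit (jacobianAt E r0))
    (k : ℕ) (i : Fin n) : X ^ (k + 1) ∣ polyEval (E i) (approxSolution E r0 k) := by
  induction k generalizing i with
  | zero =>
    rw [zero_add, pow_one, X_dvd_iff, constantCoeff_polyEval]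
    simpa [← coeff_zero_eq_constantCoeff_apply, coeff_zero_approxSolution] using hE i
  | succ k ih =>
    set b := fun i => coeff (k + 1) (polyEval (E i) (approxSolution E r0 k))
    have hstep := X_pow_dvd_approxSolution_succ_sub E r0 k
    have hlin := coeff_polyEval_sub_polyEval_eq_mulVec E r0 (coeff_zero_approxSolution E r0 k)
      k.succ_pos hstep
    have hcorr :
        (fun j => coeff (k + 1) (approxSolution E r0 (k + 1) j - approxSolution E r0 k j)) =
          -((jacobianAt E r0)⁻¹ *ᵥ b) := by
      funext j
      simp [b, approxSolution_succ_sub]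
    rw [hcorr, mulVec_neg, mulVec_mulVec,
      mul_nonsing_inv _ ((isUnit_iff_isUnit_det _).mp hJ), one_mulVec] at hlin
    refine X_pow_succ_dvd_iff.mpr ⟨?_, ?_⟩
    · simpa using (dvd_polyEval_sub_polyEval (E i) hstep).add (ih i)
    · simpa [b] using congrFun hlin i

theorem exists_polyEval_eq_zero
    (hE : ∀ i, MvPolynomial.eval (Fin.cons 0 r0) (E i) = 0) (hJ : IsUnit (jacobianAt E r0)) :
    ∃ σ : Fin n → K⟦X⟧, (∀ j, coeff 0 (σ j) = r0 j) ∧ ∀ i, polyEval (E i) σ = 0 := by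
  choose σ hσ using fun j => exists_forall_X_pow_succ_dvd_sub
    (a := fun k => approxSolution E r0 k j) fun k => X_pow_dvd_approxSolution_succ_sub E r0 k j
  refine ⟨σ, fun j => ?_, fun i => eq_zero_of_forall_X_pow_dvd fun k => ?_⟩
  · rw [← coeff_zero_approxSolution E r0 0 j, ← X_dvd_sub_iff]
    simpa using hσ j 0
  · refine (pow_dvd_pow X k.le_succ).trans ?_
    simpa using (dvd_polyEval_sub_polyEval (E i) fun j => hσ j k).add
      (X_pow_dvd_polyEval_approxSolution E r0 hE hJ k i)

end ImplicitFunction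

theorem stream_implicit_function_theorem_general {K : Type*} [Field K] {n : ℕ}
    (E : Fin n → MvPolynomial (Fin (n + 1)) K) (r0 : Fin n → K)
    (hE : ∀ i, MvPolynomial.eval (Fin.cons 0 r0) (E i) = 0)
    (hJ : IsUnit (Matrix.of fun i j : Fin n =>
      MvPolynomial.eval (Fin.cons 0 r0) (MvPolynomial.pderiv j.succ (E i)))) :
    ∃! σ : Fin n → PowerSeries K,
      (∀ i, PowerSeries.coeff 0 (σ i) = r0 i) ∧ (∀ i, polyEval (E i) σ = 0) := by
  obtain ⟨σ, hσ⟩ := exists_polyEval_eq_zero E r0 hE hJ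
  exact ⟨σ, hσ, fun τ hτ => eq_of_polyEval_eq_zero E r0 hJ hτ.1 hσ.1 hτ.2 hσ.2⟩

/-- Implicit Function Theorem for streams. -/
theorem stream_implicit_function_theorem {K : Type*} [Field K] [CharZero K] {n : ℕ}
    (E : Fin n → MvPolynomial (Fin (n + 1)) K) (r0 : Fin n → K)
    (hE : ∀ i, MvPolynomial.eval (Fin.cons 0 r0) (E i) = 0)
    (hJ : IsUnit (Matrix.of fun i j : Fin n =>
      MvPolynomial.eval (Fin.cons 0 r0) (MvPolynomial.pderiv j.succ (E i)))) :
    ∃! σ : Fin n → PowerSeries K,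
      (∀ i, PowerSeries.coeff 0 (σ i) = r0 i) ∧ (∀ i, polyEval (E i) σ = 0) :=
  stream_implicit_function_theorem_general E r0 hE hJ
end

section
/- The Taylor coefficient stream of √(1−x²) is the unique stream solution of x² + y² − 1 = 0 with initial value 1: there is a unique formal power series σ over ℝ with constant coefficient 1 satisfying X² + σ² = 1; moreover the function f(x) = √(1−x²) is analytic at 0 and for every n ≥ 0 the n-th coefficient of σ equals f⁽ⁿ⁾(0)/n!, the n-th Taylor coefficient of f at 0. -/
/-!
Taking Taylor coefficients at a point is additive and, by the Leibniz rule, multiplicative on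
functions smooth there, and it only depends on the germ. Since `√(1 - x²)² = 1 - x²` near `0`,
the Taylor series `σ` of `√(1 - x²)` satisfies `σ² = 1 - X²`. Power series over `ℝ` form a
domain, so any other solution is `±σ`, and the constant term excludes `-σ`. Analyticity of
`√(1 - x²)` comes from the binomial series of `(1 + t) ^ (1 / 2)`.
-/

open PowerSeries Filter Topology
open scoped Nat ContDiff

theorem Real.analyticAt_sqrt {x : ℝ} (hx : 0 < x) : AnalyticAt ℝ Real.sqrt x := by
  have hbin : AnalyticAt ℝ (fun t : ℝ => (1 + t) ^ (1 / 2 : ℝ)) 0 :=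
    Real.one_add_rpow_hasFPowerSeriesAt_zero.analyticAt
  have hcomp : AnalyticAt ℝ (fun y => √x * (1 + (y - x) / x) ^ (1 / 2 : ℝ)) x :=
    analyticAt_const.mul <| hbin.comp_of_eq (by fun_prop) (by simp)
  refine hcomp.congr (Eventually.of_forall fun y => ?_)
  dsimp only
  rw [← Real.sqrt_eq_rpow, ← Real.sqrt_mul hx.le]
  congr 1
  field_simp
  ring

theorem PowerSeries.eq_of_sq_eq_sq {R : Type*} [CommRing R] [IsDomain R] {σ τ : R⟦X⟧}
    (h : σ ^ 2 = τ ^ 2) (hc : constantCoeff σ ≠ -constantCoeff τ) : σ = τ :=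
  (sq_eq_sq_iff_eq_or_eq_neg.1 h).resolve_right fun hneg => hc (by rw [hneg, map_neg])

section Taylor

variable {𝕜 : Type*} [NontriviallyNormedField 𝕜]

noncomputable def taylorSeries (f : 𝕜 → 𝕜) (x : 𝕜) : 𝕜⟦X⟧ :=
  PowerSeries.mk fun n => iteratedDeriv n f x / n !

@[simp]
theorem coeff_taylorSeries (f : 𝕜 → 𝕜) (x : 𝕜) (n : ℕ) :
    coeff n (taylorSeries f x) = iteratedDeriv n f x / n ! :=
  coeff_mk _ _

theorem constantCoeff_taylorSeries (f : 𝕜 → 𝕜) (x : 𝕜) :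
    constantCoeff (taylorSeries f x) = f x := by
  simp [← coeff_zero_eq_constantCoeff_apply]

theorem taylorSeries_congr {f g : 𝕜 → 𝕜} {x : 𝕜} (h : f =ᶠ[𝓝 x] g) :
    taylorSeries f x = taylorSeries g x := by
  ext n
  simp [h.iteratedDeriv_eq n]

theorem taylorSeries_const (c x : 𝕜) : taylorSeries (fun _ => c) x = C c := by
  ext n
  rcases n with _ | n <;> simp [iteratedDeriv_const, coeff_C]

theorem taylorSeries_pow_zero [CharZero 𝕜] (m : ℕ) :
    taylorSeries (fun x : 𝕜 => x ^ m) 0 = X ^ m := by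
  ext n
  simp only [coeff_taylorSeries, iteratedDeriv_fun_pow_zero, coeff_X_pow]
  split_ifs with h
  · rw [h, div_self (Nat.cast_ne_zero.2 m.factorial_ne_zero)]
  · simp

theorem taylorSeries_sub {f g : 𝕜 → 𝕜} {x : 𝕜} (hf : ContDiffAt 𝕜 ∞ f x)
    (hg : ContDiffAt 𝕜 ∞ g x) :
    taylorSeries (fun y => f y - g y) x = taylorSeries f x - taylorSeries g x := by
  ext n
  simp [iteratedDeriv_fun_sub (hf.of_le (mod_cast le_top)) (hg.of_le (mod_cast le_top)), sub_div]

theorem taylorSeries_mul [CharZero 𝕜] {f g : 𝕜 → 𝕜} {x : 𝕜} (hf : ContDiffAt 𝕜 ∞ f x)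
    (hg : ContDiffAt 𝕜 ∞ g x) :
    taylorSeries (f * g) x = taylorSeries f x * taylorSeries g x := by
  ext n
  rw [coeff_taylorSeries,
    iteratedDeriv_mul (hf.of_le (mod_cast le_top)) (hg.of_le (mod_cast le_top)), coeff_mul,
    Finset.Nat.sum_antidiagonal_eq_sum_range_succ_mk, Finset.sum_div]
  refine Finset.sum_congr rfl fun i hi => ?_
  have hin : i ≤ n := Nat.lt_succ_iff.1 (Finset.mem_range.1 hi)
  rw [coeff_taylorSeries, coeff_taylorSeries, Nat.cast_choose 𝕜 hin]
  have : (n ! : 𝕜) ≠ 0 := Nat.cast_ne_zero.2 n.factorial_ne_zero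
  field_simp

end Taylor

/-- The Taylor coefficient stream of `√(1-x²)` is the unique stream solution of
`x² + y² - 1 = 0` with initial value `1`. -/
theorem sqrt_one_sub_sq_stream :
    (∃! σ : PowerSeries ℝ,
      PowerSeries.constantCoeff σ = 1 ∧ PowerSeries.X^2 + σ^2 = 1) ∧
    AnalyticAt ℝ (fun x : ℝ => Real.sqrt (1 - x^2)) 0 ∧
    ∀ σ : PowerSeries ℝ,
      (PowerSeries.constantCoeff σ = 1 ∧ PowerSeries.X^2 + σ^2 = 1) →
      ∀ n : ℕ,
        PowerSeries.coeff n σ =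
          iteratedDeriv n (fun x : ℝ => Real.sqrt (1 - x^2)) 0 / (n.factorial : ℝ) := by
  set f : ℝ → ℝ := fun x => √(1 - x ^ 2)
  have hf : AnalyticAt ℝ f 0 :=
    (Real.analyticAt_sqrt one_pos).comp_of_eq (by fun_prop) (by simp)
  have hf_smooth : ContDiffAt ℝ ∞ f 0 := hf.contDiffAt
  have hf_sq : f * f =ᶠ[𝓝 0] fun x => 1 - x ^ 2 := by
    have hpos : ∀ᶠ x in 𝓝 (0 : ℝ), 0 < 1 - x ^ 2 :=
      (by fun_prop : Continuous fun x : ℝ => 1 - x ^ 2).continuousAt.eventually_const_lt (by simp)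
    filter_upwards [hpos] with x hx using Real.mul_self_sqrt hx.le
  have hconst : constantCoeff (taylorSeries f 0) = 1 := by
    simp [constantCoeff_taylorSeries, f]
  have hsq : X ^ 2 + taylorSeries f 0 ^ 2 = 1 := by
    rw [sq (taylorSeries f 0), ← taylorSeries_mul hf_smooth hf_smooth, taylorSeries_congr hf_sq,
      taylorSeries_sub contDiffAt_const (by fun_prop), taylorSeries_const, taylorSeries_pow_zero,
      map_one, add_sub_cancel]
  have huniq : ∀ τ : ℝ⟦X⟧, constantCoeff τ = 1 ∧ X ^ 2 + τ ^ 2 = 1 → τ = taylorSeries f 0 :=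
    fun τ ⟨hτ, hτsq⟩ => eq_of_sq_eq_sq (add_left_cancel (hτsq.trans hsq.symm))
      (by rw [hτ, hconst]; norm_num)
  refine ⟨⟨taylorSeries f 0, ⟨hconst, hsq⟩, huniq⟩, hf, fun τ hτ n => ?_⟩
  rw [huniq τ hτ, coeff_taylorSeries]
end
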